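/- arXiv:1909.06985 — 2 statements merged into one kernel-verified Lean document; each statement's English description precedes it below -/
import Mathlib

section
/- Let F_q be a finite field with q elements and let r be an integer with 1 ≤ r < q. Then the mutual coherence of the DeVore matrix D equals exactly r/q. -/
open scoped BigOperators

noncomputable section

/-- The DeVore matrix: rows indexed by pairs `(x, y) ∈ F × F`, columns indexed by
polynomials over `F` of degree at most `r`, with entry `1` if `P x = y` and `0` otherwise. -/
def deVore (F : Type*) [Field F] [DecidableEq F] (r : ℕ) :
    Matrix (F × F) {P : Polynomial F // P.degree ≤ (r : WithBot ℕ)} ℂ :=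
  Matrix.of fun xy P => if P.1.eval xy.1 = xy.2 then 1 else 0

instance deVoreColFinite (F : Type*) [Field F] [Finite F] (r : ℕ) :
    Finite {P : Polynomial F // P.degree ≤ (r : WithBot ℕ)} := by
  have : Finite (Fin (r + 1) → F) := inferInstance
  refine Finite.of_injective
    (fun P : {P : Polynomial F // P.degree ≤ (r : WithBot ℕ)} =>
      fun i : Fin (r + 1) => P.1.coeff i) ?_
  rintro ⟨P, hP⟩ ⟨Q, hQ⟩ h
  ext1
  ext n
  by_cases hn : n ≤ r
  · have := congrFun h ⟨n, Nat.lt_succ_of_le hn⟩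
    simpa using this
  · push_neg at hn
    rw [Polynomial.coeff_eq_zero_of_degree_lt (lt_of_le_of_lt hP (by exact_mod_cast hn)),
      Polynomial.coeff_eq_zero_of_degree_lt (lt_of_le_of_lt hQ (by exact_mod_cast hn))]

noncomputable instance deVoreColFintype (F : Type*) [Field F] [Fintype F] (r : ℕ) :
    Fintype {P : Polynomial F // P.degree ≤ (r : WithBot ℕ)} :=
  Fintype.ofFinite _
/-- The standard Hermitian inner product on ℂ^ι. -/
def vHerm {ι : Type*} [Fintype ι] (u v : ι → ℂ) : ℂ := ∑ i, star (u i) * v i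

/-- The Euclidean norm on ℂ^ι. -/
def vNorm {ι : Type*} [Fintype ι] (u : ι → ℂ) : ℝ := Real.sqrt (∑ i, ‖u i‖ ^ 2)

/-- The mutual coherence of a matrix: the largest value of
`|⟨θ_i, θ_j⟩| / (‖θ_i‖₂ ‖θ_j‖₂)` over pairs of distinct columns `θ_i, θ_j`. -/
def mutualCoherence {m n : Type*} [Fintype m] (Θ : Matrix m n ℂ) : ℝ :=
  sSup {x : ℝ | ∃ i j : n, i ≠ j ∧
    x = ‖vHerm (fun k => Θ k i) (fun k => Θ k j)‖ /
      (vNorm (fun k => Θ k i) * vNorm (fun k => Θ k j))}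

/-! The column of `P` is the indicator of the graph of `x ↦ P(x)`, so the inner product of two
columns counts the points where `P` and `Q` agree and every column has norm `√q`. Distinct
polynomials of degree `≤ r` agree at most at `r` points (their difference has at most `r`
roots), and `∏_{a ∈ S} (X - a)` for an `r`-element set `S` agrees with `0` at exactly `r`
points, so the largest normalized inner product is `r / q`. -/

section GraphIndicator

variable {α β : Type*} [Fintype α] [Fintype β] [DecidableEq β]

def graphIndicator (f : α → β) : α × β → ℂ := fun k => if f k.1 = k.2 then 1 else 0

lemma vHerm_graphIndicator (f g : α → β) [DecidablePred fun x => f x = g x] :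
    vHerm (graphIndicator f) (graphIndicator g) =
      (Finset.univ.filter fun x => f x = g x).card := by
  have hfiber (x : α) : ∑ y : β, star (graphIndicator f (x, y)) * graphIndicator g (x, y) =
      if f x = g x then 1 else 0 := by
    simp [graphIndicator, eq_comm]
  rw [vHerm, Fintype.sum_prod_type]
  simp only [hfiber, Finset.sum_boole]

lemma vNorm_graphIndicator (f : α → β) :
    vNorm (graphIndicator f) = Real.sqrt (Fintype.card α) := by
  have hfiber (x : α) : ∑ y : β, ‖graphIndicator f (x, y)‖ ^ 2 = 1 := by
    simp [graphIndicator, apply_ite (fun z : ℂ => ‖z‖ ^ 2)]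
  rw [vNorm, Fintype.sum_prod_type]
  simp [hfiber]

lemma graphIndicator_coherence (f g : α → β) [DecidablePred fun x => f x = g x] :
    ‖vHerm (graphIndicator f) (graphIndicator g)‖ /
        (vNorm (graphIndicator f) * vNorm (graphIndicator g)) =
      (Finset.univ.filter fun x => f x = g x).card / Fintype.card α := by
  rw [vHerm_graphIndicator, vNorm_graphIndicator, vNorm_graphIndicator,
    Real.mul_self_sqrt (Nat.cast_nonneg _), Complex.norm_natCast]

end GraphIndicator

namespace Polynomial

variable {R : Type*} [CommRing R] [IsDomain R] [Fintype R] [DecidableEq R]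

lemma card_filter_eval_eq_le {p q : R[X]} {r : ℕ} (hpq : p ≠ q)
    (hp : p.degree ≤ r) (hq : q.degree ≤ r) :
    (Finset.univ.filter fun x => p.eval x = q.eval x).card ≤ r := by
  have hsub : (Finset.univ.filter fun x => p.eval x = q.eval x).val ⊆ (p - q).roots := by
    intro x hx
    simp_all [mem_roots (sub_ne_zero.2 hpq)]
  exact (card_le_degree_of_subset_roots hsub).trans
    (natDegree_le_iff_degree_le.2 ((degree_sub_le p q).trans (max_le hp hq)))

lemma exists_ne_zero_degree_le_card_filter_eval_eq_zero {r : ℕ} (hr : r ≤ Fintype.card R) :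
    ∃ p : R[X], p ≠ 0 ∧ p.degree ≤ r ∧
      (Finset.univ.filter fun x => p.eval x = 0).card = r := by
  obtain ⟨S, -, hS⟩ := Finset.exists_subset_card_eq (s := Finset.univ) (by simpa using hr)
  refine ⟨∏ a ∈ S, (X - C a), (monic_prod_of_monic _ _ fun a _ => monic_X_sub_C a).ne_zero,
    ?_, ?_⟩
  · rw [← natDegree_le_iff_degree_le, natDegree_finsetProd_X_sub_C_eq_card, hS]
  · convert hS
    ext x
    simp [eval_prod, Finset.prod_eq_zero_iff, sub_eq_zero]

end Polynomial

open Polynomial in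
theorem deVore_coherence_eq_general (F : Type*) [Field F] [Fintype F] [DecidableEq F]
    (q r : ℕ) (hq : Fintype.card F = q) (hrq : r < q) :
    mutualCoherence (deVore F r) = (r : ℝ) / q := by
  have hcol (P : {P : F[X] // P.degree ≤ r}) :
      (fun k => deVore F r k P) = graphIndicator P.1.eval := rfl
  apply IsGreatest.csSup_eq
  constructor
  · obtain ⟨p, hp0, hpr, hroots⟩ :=
      exists_ne_zero_degree_le_card_filter_eval_eq_zero (R := F) (hq ▸ hrq.le)
    refine ⟨⟨p, hpr⟩, ⟨0, by simp⟩, fun h => hp0 (congrArg Subtype.val h), ?_⟩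
    simp [hcol, graphIndicator_coherence, hroots, hq]
  · rintro x ⟨P, Q, hPQ, rfl⟩
    rw [hcol, hcol, graphIndicator_coherence, hq]
    gcongr
    exact card_filter_eval_eq_le (fun h => hPQ (Subtype.ext h)) P.2 Q.2

/-- For a finite field `F_q` and `1 ≤ r < q`, the mutual coherence of the DeVore matrix
equals exactly `r / q`. -/
theorem deVore_coherence_eq (F : Type*) [Field F] [Fintype F] [DecidableEq F]
    (q r : ℕ) (hq : Fintype.card F = q) (hr1 : 1 ≤ r) (hrq : r < q) :
    mutualCoherence (deVore F r) = (r : ℝ) / q :=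
  deVore_coherence_eq_general F q r hq hrq

end
end

section
/- Let F_{q₁} and F_{q₂} be finite fields with q₁ and q₂ elements, and let r₁, r₂ be integers with 1 ≤ r₁ < q₁ and 1 ≤ r₂ < q₂. Let U_b and V_b be the corresponding DeVore matrices of sizes q₁² × q₁^{r₁+1} and q₂² × q₂^{r₂+1}. Then the mutual coherence of the Kronecker product S_b = U_b ⊗ V_b equals max{r₁/q₁, r₂/q₂}. -/
/-!
A column of `A ⊗ B` is the tensor product of a column of `A` and a column of `B`, so inner
products and norms factor and the normalized correlation of two columns of `A ⊗ B` is the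
product of the correlations of their factors. Correlations lie in `[0, 1]` (Cauchy–Schwarz)
and equal `1` on the diagonal, which gives `μ(A ⊗ B) = max (μ A) (μ B)` for matrices with
nonzero columns.

For the DeVore matrix, every column has squared norm `q` and the inner product of the columns
of `P` and `Q` is the number of points where `P` and `Q` agree. For `P ≠ Q` this is at most
`r`, the number of roots of `P - Q`, and `∏_{a ∈ s} (X - a)` with `#s = r` meets `0` in
exactly `r` points, so `μ = r / q`.
-/

open scoped BigOperators

noncomputable section

open Finset Polynomial Matrix

section Coherence

variable {m n : Type*} [Fintype m]

def columnCorrelation (Θ : Matrix m n ℂ) (i j : n) : ℝ :=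
  ‖vHerm (fun k => Θ k i) (fun k => Θ k j)‖ /
    (vNorm (fun k => Θ k i) * vNorm (fun k => Θ k j))

lemma vHerm_eq_inner (u v : m → ℂ) : vHerm u v = inner ℂ (WithLp.toLp 2 u) (WithLp.toLp 2 v) := by
  simp [vHerm, PiLp.inner_apply, mul_comm]

lemma vNorm_eq_norm (u : m → ℂ) : vNorm u = ‖WithLp.toLp 2 u‖ := by
  simp [vNorm, EuclideanSpace.norm_eq]

lemma columnCorrelation_nonneg (Θ : Matrix m n ℂ) (i j : n) : 0 ≤ columnCorrelation Θ i j := by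
  unfold columnCorrelation vNorm
  positivity

lemma columnCorrelation_le_one (Θ : Matrix m n ℂ) (i j : n) : columnCorrelation Θ i j ≤ 1 := by
  rw [columnCorrelation, vHerm_eq_inner, vNorm_eq_norm, vNorm_eq_norm]
  exact div_le_one_of_le₀ (norm_inner_le_norm _ _) (by positivity)

lemma columnCorrelation_self {Θ : Matrix m n ℂ} {i : n} (h : (fun k => Θ k i) ≠ 0) :
    columnCorrelation Θ i i = 1 := by
  have : ‖WithLp.toLp 2 (fun k => Θ k i)‖ ≠ 0 := by simpa using h
  rw [columnCorrelation, vHerm_eq_inner, vNorm_eq_norm, inner_self_eq_norm_sq_to_K]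
  simp [sq, this]

lemma columnCorrelation_le_mutualCoherence (Θ : Matrix m n ℂ) {i j : n} (hij : i ≠ j) :
    columnCorrelation Θ i j ≤ mutualCoherence Θ :=
  le_csSup ⟨1, by rintro _ ⟨i, j, -, rfl⟩; exact columnCorrelation_le_one Θ i j⟩ ⟨i, j, hij, rfl⟩

lemma mutualCoherence_le {Θ : Matrix m n ℂ} {a : ℝ}
    (h : ∀ i j, i ≠ j → columnCorrelation Θ i j ≤ a) (ha : 0 ≤ a) : mutualCoherence Θ ≤ a :=
  Real.sSup_le (by rintro _ ⟨i, j, hij, rfl⟩; exact h i j hij) ha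

lemma mutualCoherence_nonneg (Θ : Matrix m n ℂ) : 0 ≤ mutualCoherence Θ :=
  Real.sSup_nonneg (by rintro _ ⟨i, j, -, rfl⟩; exact columnCorrelation_nonneg Θ i j)

end Coherence

section Kronecker

variable {m₁ m₂ n₁ n₂ : Type*} [Fintype m₁] [Fintype m₂]

lemma vHerm_tensor (u u' : m₁ → ℂ) (v v' : m₂ → ℂ) :
    vHerm (fun k : m₁ × m₂ => u k.1 * v k.2) (fun k => u' k.1 * v' k.2) =
      vHerm u u' * vHerm v v' := by
  simp only [vHerm, Fintype.sum_prod_type, Finset.sum_mul_sum, star_mul']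
  exact Finset.sum_congr rfl fun _ _ => Finset.sum_congr rfl fun _ _ => by ring

lemma vNorm_tensor (u : m₁ → ℂ) (v : m₂ → ℂ) :
    vNorm (fun k : m₁ × m₂ => u k.1 * v k.2) = vNorm u * vNorm v := by
  simp only [vNorm, Fintype.sum_prod_type, norm_mul, mul_pow, ← Finset.sum_mul_sum]
  exact Real.sqrt_mul (by positivity) _

lemma columnCorrelation_kronecker (A : Matrix m₁ n₁ ℂ) (B : Matrix m₂ n₂ ℂ) (i j : n₁ × n₂) :
    columnCorrelation (kroneckerMap (· * ·) A B) i j =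
      columnCorrelation A i.1 j.1 * columnCorrelation B i.2 j.2 := by
  have hH :=
    vHerm_tensor (fun k => A k i.1) (fun k => A k j.1) (fun k => B k i.2) (fun k => B k j.2)
  have hi := vNorm_tensor (fun k => A k i.1) (fun k => B k i.2)
  have hj := vNorm_tensor (fun k => A k j.1) (fun k => B k j.2)
  simp only [columnCorrelation, kroneckerMap_apply]
  rw [hH, hi, hj, norm_mul, div_mul_div_comm, mul_mul_mul_comm]

theorem mutualCoherence_kronecker [Nonempty n₁] [Nonempty n₂] {A : Matrix m₁ n₁ ℂ}
    {B : Matrix m₂ n₂ ℂ} (hA : ∀ i, (fun k => A k i) ≠ 0)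
    (hB : ∀ i, (fun k => B k i) ≠ 0) :
    mutualCoherence (kroneckerMap (· * ·) A B) = max (mutualCoherence A) (mutualCoherence B) := by
  refine le_antisymm (mutualCoherence_le ?_ (le_max_of_le_left (mutualCoherence_nonneg A)))
    (max_le (mutualCoherence_le (fun i j hij => ?_) (mutualCoherence_nonneg _))
      (mutualCoherence_le (fun i j hij => ?_) (mutualCoherence_nonneg _)))
  · rintro ⟨i₁, i₂⟩ ⟨j₁, j₂⟩ hij
    rw [columnCorrelation_kronecker]
    by_cases h₁ : i₁ = j₁
    · subst h₁
      have h₂ : i₂ ≠ j₂ := fun h => hij (by rw [h])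
      rw [columnCorrelation_self (hA i₁), one_mul]
      exact le_max_of_le_right (columnCorrelation_le_mutualCoherence B h₂)
    · calc columnCorrelation A i₁ j₁ * columnCorrelation B i₂ j₂ ≤ mutualCoherence A * 1 :=
            mul_le_mul (columnCorrelation_le_mutualCoherence A h₁) (columnCorrelation_le_one B _ _)
              (columnCorrelation_nonneg B _ _) (mutualCoherence_nonneg A)
        _ ≤ _ := by rw [mul_one]; exact le_max_left _ _
  · obtain ⟨k⟩ := ‹Nonempty n₂›
    calc columnCorrelation A i j = columnCorrelation (kroneckerMap (· * ·) A B) (i, k) (j, k) := by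
          rw [columnCorrelation_kronecker, columnCorrelation_self (hB k), mul_one]
      _ ≤ _ := columnCorrelation_le_mutualCoherence _ (by simpa using hij)
  · obtain ⟨k⟩ := ‹Nonempty n₁›
    calc columnCorrelation B i j = columnCorrelation (kroneckerMap (· * ·) A B) (k, i) (k, j) := by
          rw [columnCorrelation_kronecker, columnCorrelation_self (hA k), one_mul]
      _ ≤ _ := columnCorrelation_le_mutualCoherence _ (by simpa using hij)

end Kronecker

section Polynomial

variable {R : Type*} [CommRing R] [IsDomain R] [Fintype R] [DecidableEq R]

lemma card_eval_eq_le_of_ne {r : ℕ} {P Q : R[X]} (hP : P.degree ≤ r) (hQ : Q.degree ≤ r)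
    (hPQ : P ≠ Q) : #{x | P.eval x = Q.eval x} ≤ r := by
  by_contra! h
  refine hPQ (eq_of_degree_sub_lt_of_eval_finset_eq {x | P.eval x = Q.eval x} ?_
    fun x hx => (mem_filter.1 hx).2)
  exact (degree_sub_le P Q).trans_lt ((max_le hP hQ).trans_lt (by exact_mod_cast h))

lemma exists_degree_le_card_eval_eq_zero {r : ℕ} (hr : r ≤ Fintype.card R) :
    ∃ P : R[X], P ≠ 0 ∧ P.degree ≤ r ∧ #{x | P.eval x = 0} = r := by
  obtain ⟨s, -, hs⟩ := exists_subset_card_eq (s := (univ : Finset R)) (n := r) (by rwa [card_univ])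
  refine ⟨∏ a ∈ s, (X - C a), (monic_prod_of_monic _ _ fun a _ => monic_X_sub_C a).ne_zero,
    ?_, ?_⟩
  · rw [degree_prod]
    simp [hs]
  · convert hs
    ext x
    simp [eval_prod, prod_eq_zero_iff, sub_eq_zero]

end Polynomial

section DeVore

variable {F : Type*} [Field F] [DecidableEq F] {r : ℕ}

instance : Nonempty {P : F[X] // P.degree ≤ r} := ⟨⟨0, by simp⟩⟩

lemma deVore_column_ne_zero (P : {P : F[X] // P.degree ≤ r}) : (fun k => deVore F r k P) ≠ 0 :=
  fun h => by simpa [deVore] using congrFun h (0, P.1.eval 0)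

variable [Fintype F]

lemma vHerm_deVore (P Q : {P : F[X] // P.degree ≤ r}) :
    vHerm (fun k => deVore F r k P) (fun k => deVore F r k Q) = #{x | P.1.eval x = Q.1.eval x} := by
  simp [vHerm, deVore, Fintype.sum_prod_type, apply_ite star]

lemma vNorm_deVore (P : {P : F[X] // P.degree ≤ r}) :
    vNorm (fun k => deVore F r k P) = √(Fintype.card F) := by
  rw [vNorm, Fintype.sum_prod_type]
  simp [deVore, apply_ite (‖·‖)]

lemma columnCorrelation_deVore (P Q : {P : F[X] // P.degree ≤ r}) :
    columnCorrelation (deVore F r) P Q = #{x | P.1.eval x = Q.1.eval x} / Fintype.card F := by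
  rw [columnCorrelation, vHerm_deVore, vNorm_deVore, vNorm_deVore,
    Real.mul_self_sqrt (Nat.cast_nonneg _), Complex.norm_natCast]

theorem mutualCoherence_deVore (hr : r ≤ Fintype.card F) :
    mutualCoherence (deVore F r) = r / Fintype.card F := by
  refine le_antisymm (mutualCoherence_le (fun P Q hPQ => ?_) (by positivity)) ?_
  · rw [columnCorrelation_deVore]
    gcongr
    exact_mod_cast card_eval_eq_le_of_ne P.2 Q.2 (Subtype.coe_ne_coe.2 hPQ)
  · obtain ⟨P, hP0, hPr, hPcard⟩ := exists_degree_le_card_eval_eq_zero hr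
    have hne : (⟨P, hPr⟩ : {P : F[X] // P.degree ≤ r}) ≠ ⟨0, by simp⟩ :=
      fun h => hP0 (congrArg Subtype.val h)
    calc (r : ℝ) / Fintype.card F = columnCorrelation (deVore F r) ⟨P, hPr⟩ ⟨0, by simp⟩ := by
          simp [columnCorrelation_deVore, hPcard]
      _ ≤ _ := columnCorrelation_le_mutualCoherence _ hne

end DeVore

theorem deVore_kron_coherence_general (F₁ F₂ : Type*) [Field F₁] [Fintype F₁] [DecidableEq F₁]
    [Field F₂] [Fintype F₂] [DecidableEq F₂]
    (q₁ q₂ r₁ r₂ : ℕ) (hq₁ : Fintype.card F₁ = q₁) (hq₂ : Fintype.card F₂ = q₂)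
    (hrq₁ : r₁ < q₁) (hrq₂ : r₂ < q₂) :
    mutualCoherence (Matrix.kroneckerMap (· * ·) (deVore F₁ r₁) (deVore F₂ r₂)) =
      max ((r₁ : ℝ) / q₁) ((r₂ : ℝ) / q₂) := by
  subst hq₁ hq₂
  rw [mutualCoherence_kronecker deVore_column_ne_zero deVore_column_ne_zero,
    mutualCoherence_deVore hrq₁.le, mutualCoherence_deVore hrq₂.le]

/-- The mutual coherence of the Kronecker product `S_b = U_b ⊗ V_b` of two DeVore
matrices equals `max {r₁/q₁, r₂/q₂}`. -/
theorem deVore_kron_coherence (F₁ F₂ : Type*) [Field F₁] [Fintype F₁] [DecidableEq F₁]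
    [Field F₂] [Fintype F₂] [DecidableEq F₂]
    (q₁ q₂ r₁ r₂ : ℕ) (hq₁ : Fintype.card F₁ = q₁) (hq₂ : Fintype.card F₂ = q₂)
    (hr₁ : 1 ≤ r₁) (hrq₁ : r₁ < q₁) (hr₂ : 1 ≤ r₂) (hrq₂ : r₂ < q₂) :
    mutualCoherence (Matrix.kroneckerMap (· * ·) (deVore F₁ r₁) (deVore F₂ r₂)) =
      max ((r₁ : ℝ) / q₁) ((r₂ : ℝ) / q₂) :=
  deVore_kron_coherence_general F₁ F₂ q₁ q₂ r₁ r₂ hq₁ hq₂ hrq₁ hrq₂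

end
end
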